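/- arXiv:2010.14663 — 2 statements merged into one kernel-verified Lean document; each statement's English description precedes it below -/
import Mathlib

section
/- Let k ≥ 1 and let i, n be integers with 1 ≤ i ≤ n−1. Then the number of ordered pairs (u,v) of length-n words over Σ_k with lso(u,v) = i equals u_i·k^{2(n−i)}. -/
open Classical Finset Filter

/-- A border of `w`: a non-empty word that is both a proper prefix and a suffix of `w`. -/
def IsBorder {k : ℕ} (w b : List (Fin k)) : Prop :=
  b ≠ [] ∧ b ≠ w ∧ b <+: w ∧ b <:+ w

/-- A word is unbordered if it has no border. -/
def Unbordered {k : ℕ} (w : List (Fin k)) : Prop :=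
  ∀ b, ¬ IsBorder w b

/-- A right-border of `(u,v)`: a non-empty proper suffix of `u` that is a proper prefix of `v`. -/
def IsRightBorder {k : ℕ} (u v b : List (Fin k)) : Prop :=
  b ≠ [] ∧ b <:+ u ∧ b ≠ u ∧ b <+: v ∧ b ≠ v

/-- A left-border of `(u,v)`: a non-empty proper prefix of `u` that is a proper suffix of `v`. -/
def IsLeftBorder {k : ℕ} (u v b : List (Fin k)) : Prop :=
  b ≠ [] ∧ b <+: u ∧ b ≠ u ∧ b <:+ v ∧ b ≠ v

def MutuallyBordered {k : ℕ} (u v : List (Fin k)) : Prop :=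
  (∃ b, IsRightBorder u v b) ∧ (∃ b, IsLeftBorder u v b)

def MutuallyUnbordered {k : ℕ} (u v : List (Fin k)) : Prop :=
  (¬ ∃ b, IsRightBorder u v b) ∧ (¬ ∃ b, IsLeftBorder u v b)

def RightBordered {k : ℕ} (u v : List (Fin k)) : Prop :=
  (∃ b, IsRightBorder u v b) ∧ (¬ ∃ b, IsLeftBorder u v b)

/-- `lso u v`: the length of the shortest right-border of `(u,v)`, or `0` if there is none. -/
noncomputable def lso {k : ℕ} (u v : List (Fin k)) : ℕ :=
  sInf {m | ∃ b : List (Fin k), IsRightBorder u v b ∧ b.length = m}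

def IsShortestRightBorder {k : ℕ} (u v b : List (Fin k)) : Prop :=
  IsRightBorder u v b ∧ ∀ b', IsRightBorder u v b' → b.length ≤ b'.length

def IsShortestLeftBorder {k : ℕ} (u v b : List (Fin k)) : Prop :=
  IsLeftBorder u v b ∧ ∀ b', IsLeftBorder u v b' → b.length ≤ b'.length

/-- The finite set of all length-`n` words over `Σ_k`. -/
def Words (k n : ℕ) : Finset (List (Fin k)) :=
  (Finset.univ : Finset (Fin n → Fin k)).image List.ofFn

/-- `UB k n`: the number of unbordered words of length `n` over `Σ_k`. -/
noncomputable def UB (k n : ℕ) : ℕ :=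
  ((Words k n).filter Unbordered).card

/-- `M k n`: the number of mutually bordered pairs of length-`n` words over `Σ_k`. -/
noncomputable def M (k n : ℕ) : ℕ :=
  ((Words k n ×ˢ Words k n).filter (fun p => MutuallyBordered p.1 p.2)).card

/-- `R k n`: the number of right-bordered pairs of length-`n` words over `Σ_k`. -/
noncomputable def R (k n : ℕ) : ℕ :=
  ((Words k n ×ˢ Words k n).filter (fun p => RightBordered p.1 p.2)).card

/-- `U k n`: the number of mutually unbordered pairs of length-`n` words over `Σ_k`. -/
noncomputable def U (k n : ℕ) : ℕ :=
  ((Words k n ×ˢ Words k n).filter (fun p => MutuallyUnbordered p.1 p.2)).card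

/-- `G u v m`: the number of unbordered words of length `m` over `Σ_k` having
`u` as a prefix and `v` as a suffix. -/
noncomputable def G {k : ℕ} (u v : List (Fin k)) (m : ℕ) : ℕ :=
  ((Words k m).filter (fun w => Unbordered w ∧ u <+: w ∧ v <:+ w)).card

lemma mem_Words {k n : ℕ} {w : List (Fin k)} : w ∈ Words k n ↔ w.length = n := by
  constructor
  · rintro hw
    simp only [Words, Finset.mem_image] at hw
    obtain ⟨f, -, rfl⟩ := hw
    simp
  · rintro h
    simp only [Words, Finset.mem_image]
    subst h
    exact ⟨w.get, Finset.mem_univ _, List.ofFn_get w⟩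

lemma card_Words (k n : ℕ) : (Words k n).card = k ^ n := by
  rw [Words, Finset.card_image_of_injective _ List.ofFn_injective]
  simp

lemma lso_append {k n i : ℕ} (hi : 1 ≤ i) (hin : i < n) (b x y : List (Fin k))
    (hb : b.length = i) (hub : Unbordered b) (hx : x.length = n - i) (hy : y.length = n - i) :
    lso (x ++ b) (b ++ y) = i := by
  have hbne : b ≠ [] := by
    intro h; rw [h] at hb; simp at hb; omega
  have hxne : x ≠ [] := by
    intro h; rw [h] at hx; simp at hx; omega
  have hyne : y ≠ [] := by
    intro h; rw [h] at hy; simp at hy; omega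
  have hrb : IsRightBorder (x ++ b) (b ++ y) b := by
    refine ⟨hbne, List.suffix_append x b, ?_, List.prefix_append b y, ?_⟩
    · intro h
      have := congrArg List.length h
      simp at this
      exact hxne this
    · intro h
      have := congrArg List.length h
      simp at this
      exact hyne this
  have hmem : i ∈ {m | ∃ b' : List (Fin k), IsRightBorder (x ++ b) (b ++ y) b' ∧ b'.length = m} :=
    ⟨b, hrb, hb⟩
  refine le_antisymm (Nat.sInf_le hmem) (le_csInf ⟨i, hmem⟩ ?_)
  rintro m ⟨b', ⟨hb'ne, hb'su, -, hb'pr, -⟩, rfl⟩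
  by_contra hlt
  push_neg at hlt
  have hle : b'.length ≤ b.length := by omega
  have hsu : b' <:+ b := List.suffix_of_suffix_length_le hb'su (List.suffix_append x b) hle
  have hpr : b' <+: b := List.prefix_of_prefix_length_le hb'pr (List.prefix_append b y) hle
  exact hub b' ⟨hb'ne, fun h => by subst h; omega, hpr, hsu⟩

lemma lso_decomp {k n i : ℕ} (hi : 1 ≤ i) (hin : i < n) (u v : List (Fin k))
    (hu : u.length = n) (hv : v.length = n) (h : lso u v = i) :
    ∃ b x y : List (Fin k), b.length = i ∧ Unbordered b ∧ x.length = n - i ∧ y.length = n - i ∧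
      u = x ++ b ∧ v = b ++ y := by
  set A := {m | ∃ b : List (Fin k), IsRightBorder u v b ∧ b.length = m} with hA
  have hne : A.Nonempty := by
    by_contra hne
    rw [Set.not_nonempty_iff_eq_empty] at hne
    rw [lso, hA.symm] at h
    rw [hne, Nat.sInf_empty] at h
    omega
  have hmem : lso u v ∈ A := Nat.sInf_mem hne
  rw [h] at hmem
  obtain ⟨b, hrb, hbl⟩ := hmem
  obtain ⟨x, hxu⟩ := hrb.2.1
  obtain ⟨y, hyv⟩ := hrb.2.2.2.1
  have hub : Unbordered b := by
    rintro c ⟨hcne, hcnb, hcp, hcs⟩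
    have hclt : c.length < b.length :=
      lt_of_le_of_ne hcp.length_le (fun hl => hcnb (hcp.eq_of_length hl))
    have : IsRightBorder u v c := by
      refine ⟨hcne, hcs.trans hrb.2.1, ?_, hcp.trans hrb.2.2.2.1, ?_⟩
      · intro he; rw [he] at hclt; omega
      · intro he; rw [he, hv] at hclt; omega
    have : c.length ∈ A := ⟨c, this, rfl⟩
    have hsle := Nat.sInf_le this
    rw [show sInf A = lso u v from rfl, h] at hsle
    omega
  refine ⟨b, x, y, hbl, hub, ?_, ?_, hxu.symm, hyv.symm⟩
  · have := congrArg List.length hxu; simp [hbl, hu] at this; omega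
  · have := congrArg List.length hyv; simp [hbl, hv] at this; omega

theorem stmt16 (k n i : ℕ) (hk : 1 ≤ k) (hi : 1 ≤ i) (hin : i < n) :
    ((Words k n ×ˢ Words k n).filter (fun p => lso p.1 p.2 = i)).card
      = UB k i * k ^ (2 * (n - i)) := by
  have key : (((Words k i).filter Unbordered) ×ˢ (Words k (n-i) ×ˢ Words k (n-i))).card
      = ((Words k n ×ˢ Words k n).filter (fun p => lso p.1 p.2 = i)).card := by
    apply Finset.card_bij (fun p _ => (p.2.1 ++ p.1, p.1 ++ p.2.2))
    · rintro ⟨b, x, y⟩ hp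
      simp only [Finset.mem_product, Finset.mem_filter, mem_Words] at hp ⊢
      obtain ⟨⟨hbl, hub⟩, hxl, hyl⟩ := hp
      refine ⟨⟨by simp [hbl, hxl]; omega, by simp [hbl, hyl]; omega⟩, ?_⟩
      exact lso_append hi hin b x y hbl hub hxl hyl
    · rintro ⟨b, x, y⟩ hp ⟨b', x', y'⟩ hq he
      simp only [Finset.mem_product, Finset.mem_filter, mem_Words] at hp hq
      simp only [Prod.mk.injEq] at he
      obtain ⟨h1, h2⟩ := he
      have hb : b.length = b'.length := by rw [hp.1.1, hq.1.1]
      obtain ⟨hx, hbb⟩ := List.append_inj h1 (by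
        have := congrArg List.length h1; simp [hb] at this; omega)
      obtain ⟨-, hy⟩ := List.append_inj h2 hb
      simp [hx, hbb, hy]
    · rintro ⟨u, v⟩ hp
      simp only [Finset.mem_product, Finset.mem_filter, mem_Words] at hp
      obtain ⟨⟨hu, hv⟩, hl⟩ := hp
      obtain ⟨b, x, y, hbl, hub, hxl, hyl, rfl, rfl⟩ := lso_decomp hi hin u v hu hv hl
      exact ⟨⟨b, x, y⟩, by simp [Finset.mem_product, Finset.mem_filter, mem_Words, hbl, hub, hxl, hyl]⟩
  rw [← key, Finset.card_product, Finset.card_product, card_Words,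
    ← pow_add, two_mul]
  rfl
end

section
/- Let k ≥ 2. Then the series Σ_{i=1}^{∞} i·u_i·k^{−2i} converges, and the expected value of lso(u,v) over all ordered pairs (u,v) of length-n words over Σ_k converges to it: lim_{n→∞} k^{−2n}·Σ_{(u,v) ∈ Σ_k^n × Σ_k^n} lso(u,v) = Σ_{i=1}^{∞} i·u_i·k^{−2i}. In particular, the expected value of lso(u,v) is O(1) as n → ∞. Moreover, for every n ≥ 1, Σ_{i=1}^{n} i·u_i·k^{−2i} ≤ Σ_{i=1}^{∞} i·u_i·k^{−2i} ≤ (Σ_{i=1}^{n} i·u_i·k^{−2i}) + k^{−n}·(k(n+1)−n)/(k−1)^2. -/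
/-!
The shortest right-border of a pair is unbordered, and conversely an unbordered word `b` is the
shortest right-border of `(u' ++ b, b ++ v')`. So for `0 < i < n` the pairs of length-`n` words
with `lso = i` are exactly these, and there are `u_i k^(2(n-i))` of them; the mean of `lso` is
therefore the partial sum `∑_{i<n} i u_i k^(-2i)`. Since `u_i ≤ k^i`, the terms are dominated by
`i k^(-i)`, whose tail beyond `n` sums to `k^(-n) (k(n+1) - n)/(k-1)^2`.
-/

open Classical Finset Filter

section Words

variable {k n : ℕ}

lemma mem_words {w : List (Fin k)} : w ∈ Words k n ↔ w.length = n := by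
  simp only [Words, Finset.mem_image, Finset.mem_univ, true_and]
  constructor
  · rintro ⟨f, rfl⟩
    exact List.length_ofFn
  · rintro rfl
    exact ⟨w.get, List.ofFn_get w⟩

lemma card_words : #(Words k n) = k ^ n := by
  rw [Words, Finset.card_image_of_injective _ List.ofFn_injective, Finset.card_univ,
    Fintype.card_fun, Fintype.card_fin, Fintype.card_fin]

lemma UB_le_pow : UB k n ≤ k ^ n :=
  card_words (k := k) ▸ Finset.card_filter_le _ _

end Words

section Lso

variable {k : ℕ} {u v b : List (Fin k)}

lemma lso_eq_length_of_isShortestRightBorder (h : IsShortestRightBorder u v b) :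
    lso u v = b.length :=
  le_antisymm (Nat.sInf_le ⟨b, h.1, rfl⟩)
    (le_csInf ⟨_, b, h.1, rfl⟩ (by rintro _ ⟨c, hc, rfl⟩; exact h.2 c hc))

lemma exists_isShortestRightBorder_of_pos_lso (h : 0 < lso u v) :
    ∃ b, IsShortestRightBorder u v b := by
  obtain ⟨b, hb, hlen⟩ := Nat.sInf_mem (Nat.nonempty_of_pos_sInf h)
  exact ⟨b, hb, fun c hc => hlen ▸ Nat.sInf_le ⟨c, hc, rfl⟩⟩

lemma lso_lt_length (hu : u ≠ []) : lso u v < u.length := by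
  rcases Nat.eq_zero_or_pos (lso u v) with h | h
  · exact h ▸ List.length_pos_of_ne_nil hu
  · obtain ⟨b, hb⟩ := exists_isShortestRightBorder_of_pos_lso h
    obtain ⟨-, hbu, hbu', -, -⟩ := hb.1
    rw [lso_eq_length_of_isShortestRightBorder hb]
    exact lt_of_le_of_ne hbu.length_le (fun he => hbu' (hbu.eq_of_length he))

-- A border of `b` would be a shorter right-border of `(u, v)`.
lemma IsShortestRightBorder.unbordered (h : IsShortestRightBorder u v b) : Unbordered b := by
  rintro c ⟨hc0, hcb, hpre, hsuf⟩
  obtain ⟨⟨-, hbu, -, hbv, -⟩, hmin⟩ := h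
  have hlt : c.length < b.length :=
    lt_of_le_of_ne hpre.length_le (fun he => hcb (hpre.eq_of_length he))
  refine hlt.not_ge (hmin c ⟨hc0, hsuf.trans hbu, ?_, hpre.trans hbv, ?_⟩)
  · rintro rfl
    exact hlt.not_ge hbu.length_le
  · rintro rfl
    exact hlt.not_ge hbv.length_le

lemma isShortestRightBorder_append (hb : Unbordered b) (hb0 : b ≠ []) (hu : u ≠ [])
    (hv : v ≠ []) : IsShortestRightBorder (u ++ b) (b ++ v) b := by
  refine ⟨⟨hb0, List.suffix_append u b, fun h => hu (List.self_eq_append_left.1 h),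
    List.prefix_append b v, fun h => hv (List.self_eq_append_right.1 h)⟩, fun c hc => ?_⟩
  obtain ⟨hc0, hcu, -, hcv, -⟩ := hc
  by_contra! hlt
  exact hb c ⟨hc0, fun h => (h ▸ hlt).false,
    List.prefix_of_prefix_length_le hcv (List.prefix_append b v) hlt.le,
    List.suffix_of_suffix_length_le hcu (List.suffix_append u b) hlt.le⟩

lemma exists_eq_append_of_pos_lso (h : 0 < lso u v) :
    ∃ b u' v', Unbordered b ∧ b.length = lso u v ∧ u = u' ++ b ∧ v = b ++ v' := by
  obtain ⟨b, hb⟩ := exists_isShortestRightBorder_of_pos_lso h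
  obtain ⟨-, ⟨u', hu'⟩, -, ⟨v', hv'⟩, -⟩ := hb.1
  exact ⟨b, u', v', hb.unbordered, (lso_eq_length_of_isShortestRightBorder hb).symm,
    hu'.symm, hv'.symm⟩

end Lso

section Counting

variable {k n i : ℕ}

lemma filter_lso_eq_image (hi : 0 < i) (hin : i < n) :
    (Words k n ×ˢ Words k n).filter (fun p => lso p.1 p.2 = i) =
      ((Words k i).filter Unbordered ×ˢ (Words k (n - i) ×ˢ Words k (n - i))).image
        (fun q => (q.2.1 ++ q.1, q.1 ++ q.2.2)) := by
  ext ⟨u, v⟩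
  simp only [Finset.mem_filter, Finset.mem_product, Finset.mem_image, Prod.exists, Prod.mk.injEq,
    mem_words]
  constructor
  · rintro ⟨⟨hu, hv⟩, rfl⟩
    obtain ⟨b, u', v', hb, hlen, rfl, rfl⟩ := exists_eq_append_of_pos_lso hi
    simp only [List.length_append] at hu hv
    exact ⟨b, u', v', ⟨⟨hlen, hb⟩, by omega, by omega⟩, rfl, rfl⟩
  · rintro ⟨b, u', v', ⟨⟨hb, hbu⟩, hu', hv'⟩, rfl, rfl⟩
    have ne_nil {w : List (Fin k)} {m : ℕ} (hw : w.length = m) (hm : 0 < m) : w ≠ [] :=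
      List.ne_nil_of_length_pos (hw ▸ hm)
    refine ⟨⟨by simp; omega, by simp; omega⟩, ?_⟩
    rw [lso_eq_length_of_isShortestRightBorder
      (isShortestRightBorder_append hbu (ne_nil hb hi) (ne_nil hu' (by omega))
        (ne_nil hv' (by omega))), hb]

lemma card_filter_lso_eq (hi : 0 < i) (hin : i < n) :
    #((Words k n ×ˢ Words k n).filter (fun p => lso p.1 p.2 = i)) =
      UB k i * (k ^ (n - i) * k ^ (n - i)) := by
  rw [filter_lso_eq_image hi hin, Finset.card_image_of_injOn, Finset.card_product,
    Finset.card_product, card_words, UB]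
  rintro ⟨b, u', v'⟩ hq ⟨c, u'', v''⟩ hq' heq
  simp only [Finset.coe_product, Finset.coe_filter, Set.mem_prod, Set.mem_ofPred_eq,
    Finset.mem_coe, mem_words] at hq hq'
  simp only [Prod.mk.injEq] at heq ⊢
  obtain ⟨rfl, rfl⟩ := List.append_inj' heq.1 (hq.1.1.trans hq'.1.1.symm)
  exact ⟨rfl, rfl, List.append_cancel_left heq.2⟩

lemma sum_lso_eq (hn : 0 < n) :
    ∑ p ∈ Words k n ×ˢ Words k n, lso p.1 p.2 =
      ∑ i ∈ Finset.range n, i * (UB k i * (k ^ (n - i) * k ^ (n - i))) := by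
  have hmaps : ∀ p ∈ Words k n ×ˢ Words k n, lso p.1 p.2 ∈ Finset.range n := by
    rintro ⟨u, v⟩ hp
    have hu : u.length = n := mem_words.1 (Finset.mem_product.1 hp).1
    exact Finset.mem_range.2 (hu ▸ lso_lt_length (List.ne_nil_of_length_pos (hu ▸ hn)))
  rw [← Finset.sum_fiberwise_of_maps_to hmaps]
  refine Finset.sum_congr rfl fun i hi => ?_
  rw [Finset.sum_congr rfl fun p hp => (Finset.mem_filter.1 hp).2, Finset.sum_const, smul_eq_mul]
  rcases Nat.eq_zero_or_pos i with rfl | hi0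
  · simp
  · rw [card_filter_lso_eq hi0 (Finset.mem_range.1 hi), mul_comm]

end Counting

-- `i` times the fraction of pairs in `Σ_k^n × Σ_k^n` with `lso = i`, for every `n > i`.
noncomputable def lsoTerm (k i : ℕ) : ℝ :=
  (i : ℝ) * (UB k i : ℝ) / (k : ℝ) ^ (2 * i)

section LsoTerm

variable {k : ℕ}

lemma lsoTerm_zero : lsoTerm k 0 = 0 := by
  simp [lsoTerm]

lemma lsoTerm_nonneg (i : ℕ) : 0 ≤ lsoTerm k i := by
  unfold lsoTerm
  positivity

lemma lsoTerm_le (hk : 0 < k) (i : ℕ) : lsoTerm k i ≤ i * (k : ℝ)⁻¹ ^ i := by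
  have hki : (0 : ℝ) < (k : ℝ) ^ i := by positivity
  calc lsoTerm k i ≤ (i : ℝ) * (k : ℝ) ^ i / (k : ℝ) ^ (2 * i) := by
        unfold lsoTerm
        gcongr
        exact_mod_cast UB_le_pow
    _ = i * (k : ℝ)⁻¹ ^ i := by
        rw [two_mul, pow_add, inv_pow]
        field_simp

lemma sum_lso_div_eq_sum_lsoTerm (hk : 0 < k) {n : ℕ} (hn : 0 < n) :
    (∑ p ∈ Words k n ×ˢ Words k n, (lso p.1 p.2 : ℝ)) / (k : ℝ) ^ (2 * n) =
      ∑ i ∈ Finset.range n, lsoTerm k i := by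
  rw [← Nat.cast_sum, sum_lso_eq hn, Nat.cast_sum, Finset.sum_div]
  refine Finset.sum_congr rfl fun i hi => ?_
  have hpow : (k : ℝ) ^ (2 * n) = (k : ℝ) ^ (n - i) * (k : ℝ) ^ (n - i) * (k : ℝ) ^ (2 * i) := by
    rw [← pow_add, ← pow_add]
    congr 1
    have := Finset.mem_range.1 hi
    omega
  have hk0 : (k : ℝ) ≠ 0 := by positivity
  rw [lsoTerm, hpow]
  push_cast
  field_simp

lemma sum_Icc_lsoTerm (n : ℕ) :
    ∑ i ∈ Finset.Icc 1 n, lsoTerm k i = ∑ i ∈ Finset.range (n + 1), lsoTerm k i := by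
  rw [Finset.range_eq_Ico, Finset.sum_eq_sum_Ico_succ_bot n.succ_pos, lsoTerm_zero, zero_add,
    ← Finset.Ico_add_one_right_eq_Icc]
  rfl

end LsoTerm

lemma tsum_coe_mul_geometric_nat_add_of_norm_lt_one {x : ℝ} (hx : ‖x‖ < 1) (N : ℕ) :
    ∑' j : ℕ, ((j + N : ℕ) : ℝ) * x ^ (j + N) = x ^ N * (N * (1 - x) + x) / (1 - x) ^ 2 := by
  have hsplit : ∀ j : ℕ, ((j + N : ℕ) : ℝ) * x ^ (j + N) = x ^ N * (j * x ^ j) + x ^ N * N * x ^ j := by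
    intro j
    push_cast
    ring
  have hlin : Summable fun j : ℕ => (j : ℝ) * x ^ j := by
    simpa using summable_pow_mul_geometric_of_norm_lt_one 1 hx
  have hx1 : 1 - x ≠ 0 := sub_ne_zero.2 (ne_of_lt (lt_of_le_of_lt (le_abs_self x) hx)).symm
  rw [tsum_congr hsplit, Summable.tsum_add (hlin.mul_left _)
      ((summable_geometric_of_norm_lt_one hx).mul_left _),
    tsum_mul_left, tsum_mul_left, tsum_coe_mul_geometric_of_norm_lt_one hx,
    tsum_geometric_of_norm_lt_one hx]
  field_simp
  ring

section Limit

variable {k : ℕ}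

lemma norm_inv_natCast_lt_one (hk : 1 < k) : ‖(k : ℝ)⁻¹‖ < 1 := by
  rw [norm_inv, Real.norm_natCast]
  exact inv_lt_one_of_one_lt₀ (by exact_mod_cast hk)

lemma summable_lsoTerm (hk : 1 < k) : Summable (lsoTerm k) :=
  Summable.of_nonneg_of_le lsoTerm_nonneg (lsoTerm_le (by omega))
    (by simpa using summable_pow_mul_geometric_of_norm_lt_one 1 (norm_inv_natCast_lt_one hk))

lemma tsum_lsoTerm_nat_add_le (hk : 1 < k) (n : ℕ) :
    ∑' j : ℕ, lsoTerm k (j + (n + 1)) ≤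
      (1 / (k : ℝ) ^ n) * (((k : ℝ) * (n + 1) - n) / ((k : ℝ) - 1) ^ 2) := by
  have hx := norm_inv_natCast_lt_one hk
  have hlin : Summable fun m : ℕ => (m : ℝ) * (k : ℝ)⁻¹ ^ m := by
    simpa using summable_pow_mul_geometric_of_norm_lt_one 1 hx
  have hgeom := (summable_nat_add_iff (n + 1)).2 hlin
  have hk1 : (k : ℝ) - 1 ≠ 0 := sub_ne_zero.2 (by exact_mod_cast hk.ne')
  calc ∑' j : ℕ, lsoTerm k (j + (n + 1))
      ≤ ∑' j : ℕ, ((j + (n + 1) : ℕ) : ℝ) * (k : ℝ)⁻¹ ^ (j + (n + 1)) :=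
        Summable.tsum_le_tsum (fun j => lsoTerm_le (by omega) _)
          ((summable_nat_add_iff (n + 1)).2 (summable_lsoTerm hk)) hgeom
    _ = (1 / (k : ℝ) ^ n) * (((k : ℝ) * (n + 1) - n) / ((k : ℝ) - 1) ^ 2) := by
        have hk0 : (k : ℝ) ≠ 0 := by positivity
        rw [tsum_coe_mul_geometric_nat_add_of_norm_lt_one hx, inv_pow]
        field_simp
        push_cast
        ring

end Limit

theorem stmt17 (k : ℕ) (hk : 2 ≤ k) :
    Summable (fun i : ℕ => ((i + 1 : ℕ) : ℝ) * (UB k (i + 1) : ℝ) / (k : ℝ) ^ (2 * (i + 1))) ∧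
    Filter.Tendsto
      (fun n : ℕ =>
        (∑ p ∈ Words k n ×ˢ Words k n, (lso p.1 p.2 : ℝ)) / (k : ℝ) ^ (2 * n))
      Filter.atTop
      (nhds (∑' i : ℕ, ((i + 1 : ℕ) : ℝ) * (UB k (i + 1) : ℝ) / (k : ℝ) ^ (2 * (i + 1)))) ∧
    ∀ n : ℕ, 1 ≤ n →
      (∑ i ∈ Finset.Icc 1 n, (i : ℝ) * (UB k i : ℝ) / (k : ℝ) ^ (2 * i)) ≤
        (∑' i : ℕ, ((i + 1 : ℕ) : ℝ) * (UB k (i + 1) : ℝ) / (k : ℝ) ^ (2 * (i + 1))) ∧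
      (∑' i : ℕ, ((i + 1 : ℕ) : ℝ) * (UB k (i + 1) : ℝ) / (k : ℝ) ^ (2 * (i + 1))) ≤
        (∑ i ∈ Finset.Icc 1 n, (i : ℝ) * (UB k i : ℝ) / (k : ℝ) ^ (2 * i)) +
          (1 / (k : ℝ) ^ n) * (((k : ℝ) * (n + 1) - n) / ((k : ℝ) - 1) ^ 2) := by
  have hsum := summable_lsoTerm hk
  have htsum : ∑' i, lsoTerm k (i + 1) = ∑' i, lsoTerm k i := by
    rw [hsum.tsum_eq_zero_add, lsoTerm_zero, zero_add]
  refine ⟨(summable_nat_add_iff 1).2 hsum, ?_, fun n _ => ⟨?_, ?_⟩⟩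
  · show Tendsto _ atTop (nhds (∑' i, lsoTerm k (i + 1)))
    rw [htsum]
    refine hsum.hasSum.tendsto_sum_nat.congr' ?_
    filter_upwards [eventually_gt_atTop 0] with n hn
    exact (sum_lso_div_eq_sum_lsoTerm (by omega) hn).symm
  · show ∑ i ∈ Finset.Icc 1 n, lsoTerm k i ≤ ∑' i, lsoTerm k (i + 1)
    rw [htsum, sum_Icc_lsoTerm]
    exact hsum.sum_le_tsum _ fun i _ => lsoTerm_nonneg i
  · show ∑' i, lsoTerm k (i + 1) ≤ ∑ i ∈ Finset.Icc 1 n, lsoTerm k i + _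
    rw [htsum, sum_Icc_lsoTerm, ← hsum.sum_add_tsum_nat_add (n + 1)]
    exact add_le_add_right (tsum_lsoTerm_nat_add_le hk n) _
end
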